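/- For all integers k ≥ 1 and n ≥ 2, setting r = k·⌊log₂ n⌋, there exists a linear map π from ℝ^{V(PLC(k,n))} to ℝ^{E(K_r)} such that the image under π of the polytope STAB_{k²}(PLC(k,n)) equals the cut polytope CUT(K_r); that is, CUT(K_r) is a projection of STAB_{k²}(PLC(k,n)). -/
import Mathlib

/-- A set of vertices is independent in `G` if no two of its elements are adjacent. -/
def IsIndepSet {V : Type*} (G : SimpleGraph V) (S : Set V) : Prop :=
  ∀ ⦃u⦄, u ∈ S → ∀ ⦃v⦄, v ∈ S → ¬ G.Adj u v

/-- The characteristic vector of a finite vertex set `S`. -/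
noncomputable def charVec {V : Type*} (S : Finset V) : V → ℝ :=
  Set.indicator (↑S) (fun _ => 1)

/-- `STAB G k`: the convex hull of characteristic vectors of independent sets of size
exactly `k`. -/
noncomputable def STAB {V : Type*} (G : SimpleGraph V) (k : ℕ) : Set (V → ℝ) :=
  convexHull ℝ {x | ∃ S : Finset V, IsIndepSet G ↑S ∧ S.card = k ∧ x = charVec S}

/-- `STABle G k`: the convex hull of characteristic vectors of independent sets of size
at most `k`. -/
noncomputable def STABle {V : Type*} (G : SimpleGraph V) (k : ℕ) : Set (V → ℝ) :=
  convexHull ℝ {x | ∃ S : Finset V, IsIndepSet G ↑S ∧ S.card ≤ k ∧ x = charVec S}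

/-- `P ⊆ ℝ^V` admits an extended formulation of size `N`: there is a polyhedron
`Q = {x : A x ≤ b, C x = d}` where `A` has `N` rows, and a linear projection `π`
with `π(Q) = P`. -/
def HasEF {V : Type*} (P : Set (V → ℝ)) (N : ℕ) : Prop :=
  ∃ (m p : ℕ) (A : Matrix (Fin N) (Fin m) ℝ) (b : Fin N → ℝ)
    (C : Matrix (Fin p) (Fin m) ℝ) (d : Fin p → ℝ)
    (π : (Fin m → ℝ) →ₗ[ℝ] (V → ℝ)),
    π '' {x | A.mulVec x ≤ b ∧ C.mulVec x = d} = P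


/-- Vertices of the paired local-cut graph `PLC(k,n)` with `L = ⌊log₂ n⌋`:
cut vertices `(i, S)` with `i ∈ [k]`, `S ⊆ [L]`, and pairing vertices `(i, j, S, S')`
with `i ≠ j ∈ [k]`, `S, S' ⊆ [L]`. -/
abbrev PLCVertex (k L : ℕ) :=
  (Fin k × Finset (Fin L)) ⊕
    ({ij : Fin k × Fin k // ij.1 ≠ ij.2} × Finset (Fin L) × Finset (Fin L))

/-- The base relation generating the edges of `PLC(k,n)`. -/
def plcRel (k L : ℕ) : PLCVertex k L → PLCVertex k L → Prop
  | Sum.inl a, Sum.inl b => a.1 = b.1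
  | Sum.inr a, Sum.inr b => a.1 = b.1
  | Sum.inl a, Sum.inr b => (a.1 = b.1.1.1 ∧ a.2 ≠ b.2.1) ∨ (a.1 = b.1.1.2 ∧ a.2 ≠ b.2.2)
  | Sum.inr _, Sum.inl _ => False

/-- The paired local-cut graph `PLC(k,n)`: two distinct cut vertices with the same first
coordinate are adjacent; two distinct pairing vertices with the same first two coordinates
are adjacent; a cut vertex `(i,S)` and a pairing vertex `(j₁,j₂,S₁,S₂)` are adjacent iff
(`i = j₁` and `S ≠ S₁`) or (`i = j₂` and `S ≠ S₂`). -/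
def PLC (k n : ℕ) : SimpleGraph (PLCVertex k (Nat.log 2 n)) :=
  SimpleGraph.fromRel (plcRel k (Nat.log 2 n))

/-- The edges of the complete graph `K_r`, indexed by ordered pairs `u < v`. -/
abbrev EdgeIdx (r : ℕ) := {p : Fin r × Fin r // p.1 < p.2}

/-- The cut vector of the cut of `K_r` induced by `S`: coordinate `uv` is `1` iff exactly one
of `u, v` lies in `S`. -/
noncomputable def cutVec (r : ℕ) (S : Finset (Fin r)) : EdgeIdx r → ℝ :=
  fun e => if (e.1.1 ∈ S ↔ e.1.2 ∈ S) then 0 else 1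

/-- The cut polytope of the complete graph `K_r`. -/
noncomputable def CUT (r : ℕ) : Set (EdgeIdx r → ℝ) :=
  convexHull ℝ {x | ∃ S : Finset (Fin r), x = cutVec r S}

/-! ### Auxiliary material -/

section Aux

variable {k L : ℕ}

/-- The "type" of a PLC vertex: its block index (or pair of block indices). -/
def plcKey : PLCVertex k L → Fin k ⊕ {ij : Fin k × Fin k // ij.1 ≠ ij.2} :=
  Sum.map Prod.fst Prod.fst

/-- The canonical independent set associated to a family of local cuts. -/
def Iset (f : Fin k → Finset (Fin L)) : Finset (PLCVertex k L) :=
  (Finset.univ.image fun i : Fin k => (Sum.inl (i, f i) : PLCVertex k L)) ∪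
  (Finset.univ.image fun ij : {ij : Fin k × Fin k // ij.1 ≠ ij.2} =>
    (Sum.inr (ij, f ij.1.1, f ij.1.2) : PLCVertex k L))

lemma mem_Iset (f : Fin k → Finset (Fin L)) (w : PLCVertex k L) :
    w ∈ Iset f ↔ (∃ i, w = Sum.inl (i, f i)) ∨
      (∃ ij : {ij : Fin k × Fin k // ij.1 ≠ ij.2}, w = Sum.inr (ij, f ij.1.1, f ij.1.2)) := by
  simp [Iset, eq_comm]

lemma iset_indep (f : Fin k → Finset (Fin L)) :
    IsIndepSet (SimpleGraph.fromRel (plcRel k L)) ↑(Iset f) := by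
  intro u hu v hv hadj
  rw [SimpleGraph.fromRel_adj] at hadj
  obtain ⟨hne, hrel⟩ := hadj
  rw [Finset.mem_coe, mem_Iset] at hu hv
  rcases hu with ⟨i, rfl⟩ | ⟨ij, rfl⟩ <;> rcases hv with ⟨i', rfl⟩ | ⟨ij', rfl⟩ <;>
    simp only [plcRel, or_false, false_or] at hrel
  · rcases hrel with h | h <;> (cases h; exact hne rfl)
  · rcases hrel with ⟨rfl, h⟩ | ⟨rfl, h⟩ <;> exact h rfl
  · rcases hrel with ⟨rfl, h⟩ | ⟨rfl, h⟩ <;> exact h rfl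
  · rcases hrel with h | h <;> (cases h; exact hne rfl)

lemma card_subtype_ne (k : ℕ) :
    Fintype.card {ij : Fin k × Fin k // ij.1 ≠ ij.2} = k * k - k := by
  have h1 : Fintype.card {ij : Fin k × Fin k // ij.1 = ij.2} = k := by
    have e : {ij : Fin k × Fin k // ij.1 = ij.2} ≃ Fin k :=
      ⟨fun x => x.1.1, fun i => ⟨(i, i), rfl⟩,
        by rintro ⟨⟨a, b⟩, h⟩; cases h; rfl, fun i => rfl⟩
    rw [Fintype.card_congr e, Fintype.card_fin]
  have h2 := Fintype.card_subtype_compl (fun ij : Fin k × Fin k => ij.1 = ij.2)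
  rw [h1, Fintype.card_prod, Fintype.card_fin] at h2
  exact h2

lemma inj1 (f : Fin k → Finset (Fin L)) :
    Function.Injective (fun i : Fin k => (Sum.inl (i, f i) : PLCVertex k L)) := by
  intro a b h
  simp only [Sum.inl.injEq, Prod.mk.injEq] at h
  exact h.1

lemma inj2 (f : Fin k → Finset (Fin L)) :
    Function.Injective (fun ij : {ij : Fin k × Fin k // ij.1 ≠ ij.2} =>
      (Sum.inr (ij, f ij.1.1, f ij.1.2) : PLCVertex k L)) := by
  intro a b h
  simp only [Sum.inr.injEq, Prod.mk.injEq] at h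
  exact h.1

lemma iset_disj (f : Fin k → Finset (Fin L)) :
    Disjoint
      (Finset.univ.image fun i : Fin k => (Sum.inl (i, f i) : PLCVertex k L))
      (Finset.univ.image fun ij : {ij : Fin k × Fin k // ij.1 ≠ ij.2} =>
        (Sum.inr (ij, f ij.1.1, f ij.1.2) : PLCVertex k L)) := by
  rw [Finset.disjoint_left]
  rintro a ha hb
  simp only [Finset.mem_image, Finset.mem_univ, true_and] at ha hb
  obtain ⟨i, rfl⟩ := ha
  obtain ⟨ij, h⟩ := hb
  exact absurd h (by simp)

lemma card_Iset (f : Fin k → Finset (Fin L)) : (Iset f).card = k ^ 2 := by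
  rw [Iset, Finset.card_union_of_disjoint (iset_disj f),
    Finset.card_image_of_injective _ (inj1 f), Finset.card_image_of_injective _ (inj2 f),
    Finset.card_univ, Finset.card_univ, Fintype.card_fin, card_subtype_ne, pow_two]
  have hkk : k ≤ k * k := by nlinarith
  omega

lemma indep_structure {S : Finset (PLCVertex k L)}
    (hind : IsIndepSet (SimpleGraph.fromRel (plcRel k L)) ↑S)
    (hcard : S.card = k ^ 2) : ∃ f, S = Iset f := by
  classical
  have hkeyinj : ∀ v ∈ S, ∀ w ∈ S, plcKey v = plcKey w → v = w := by
    intro v hv w hw hkey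
    by_contra hne
    refine hind hv hw ?_
    rw [SimpleGraph.fromRel_adj]
    refine ⟨hne, ?_⟩
    match v, w with
    | Sum.inl a, Sum.inl b => exact Or.inl (Sum.inl.inj hkey)
    | Sum.inr a, Sum.inr b => exact Or.inl (Sum.inr.inj hkey)
    | Sum.inl a, Sum.inr b => exact absurd hkey (by simp [plcKey])
    | Sum.inr a, Sum.inl b => exact absurd hkey (by simp [plcKey])
  have hcardkey : Fintype.card (Fin k ⊕ {ij : Fin k × Fin k // ij.1 ≠ ij.2}) = k ^ 2 := by
    rw [Fintype.card_sum, Fintype.card_fin, card_subtype_ne, pow_two]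
    have hkk : k ≤ k * k := by nlinarith
    omega
  have himg : S.image plcKey = Finset.univ := by
    apply Finset.eq_univ_of_card
    rw [Finset.card_image_of_injOn (fun v hv w hw => hkeyinj v hv w hw), hcard, hcardkey]
  have hsurj : ∀ t, ∃ v, v ∈ S ∧ plcKey v = t := by
    intro t
    have ht : t ∈ S.image plcKey := himg ▸ Finset.mem_univ t
    simpa [Finset.mem_image] using ht
  choose vfn hvmem hvkey using hsurj
  set f : Fin k → Finset (Fin L) := fun i =>
    match vfn (Sum.inl i) with
    | Sum.inl a => a.2
    | Sum.inr _ => ∅ with hf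
  have hcut : ∀ i : Fin k, (Sum.inl (i, f i) : PLCVertex k L) ∈ S := by
    intro i
    have hk := hvkey (Sum.inl i)
    have hm := hvmem (Sum.inl i)
    cases hv : vfn (Sum.inl i) with
    | inl a =>
      rw [hv] at hk hm
      have ha1 : a.1 = i := by simpa [plcKey] using hk
      have hfi : f i = a.2 := by simp only [hf]; rw [hv]
      rw [hfi, ← ha1, Prod.mk.eta]
      exact hm
    | inr a =>
      rw [hv] at hk
      simp [plcKey] at hk
  have hsub : S ⊆ Iset f := by
    intro v hv
    rw [mem_Iset]
    match v with
    | Sum.inl a =>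
      left
      exact ⟨a.1, hkeyinj _ hv _ (hcut a.1) rfl⟩
    | Sum.inr b =>
      right
      refine ⟨b.1, ?_⟩
      have key : ∀ i : Fin k,
          ¬ ((i = b.1.1.1 ∧ f i ≠ b.2.1) ∨ (i = b.1.1.2 ∧ f i ≠ b.2.2)) := by
        intro i hrel
        refine hind (hcut i) hv ?_
        rw [SimpleGraph.fromRel_adj]
        exact ⟨by simp, Or.inl hrel⟩
      have hT1 : f b.1.1.1 = b.2.1 := by
        by_contra hne
        exact key b.1.1.1 (Or.inl ⟨rfl, hne⟩)
      have hT2 : f b.1.1.2 = b.2.2 := by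
        by_contra hne
        exact key b.1.1.2 (Or.inr ⟨rfl, hne⟩)
      rw [hT1, hT2]
  exact ⟨f, Finset.eq_of_subset_of_card_le hsub (by rw [card_Iset, hcard])⟩

/-- Coefficients of the projection. -/
noncomputable def plcCoef (e : EdgeIdx (k * L)) : PLCVertex k L → ℝ :=
  Sum.elim
    (fun a =>
      if a.1 = (finProdFinEquiv.symm e.1.1).1 ∧ a.1 = (finProdFinEquiv.symm e.1.2).1 then
        (if ((finProdFinEquiv.symm e.1.1).2 ∈ a.2 ↔ (finProdFinEquiv.symm e.1.2).2 ∈ a.2)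
          then 0 else 1)
      else 0)
    (fun b =>
      if b.1.1.1 = (finProdFinEquiv.symm e.1.1).1 ∧ b.1.1.2 = (finProdFinEquiv.symm e.1.2).1 then
        (if ((finProdFinEquiv.symm e.1.1).2 ∈ b.2.1 ↔ (finProdFinEquiv.symm e.1.2).2 ∈ b.2.2)
          then 0 else 1)
      else 0)

/-- The projection map. -/
noncomputable def plcProj (k L : ℕ) : (PLCVertex k L → ℝ) →ₗ[ℝ] (EdgeIdx (k * L) → ℝ) :=
  LinearMap.pi fun e => ∑ w : PLCVertex k L, plcCoef e w • LinearMap.proj w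

lemma plcProj_apply (x : PLCVertex k L → ℝ) (e : EdgeIdx (k * L)) :
    plcProj k L x e = ∑ w : PLCVertex k L, plcCoef e w * x w := by
  simp [plcProj, LinearMap.pi_apply, LinearMap.sum_apply, LinearMap.smul_apply,
    LinearMap.proj_apply, smul_eq_mul]

/-- The global cut associated to a family of local cuts. -/
noncomputable def bigCut (f : Fin k → Finset (Fin L)) : Finset (Fin (k * L)) :=
  Finset.univ.filter fun u => (finProdFinEquiv.symm u).2 ∈ f (finProdFinEquiv.symm u).1

lemma bigCut_surj (T : Finset (Fin (k * L))) : ∃ f : Fin k → Finset (Fin L), bigCut f = T := by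
  classical
  refine ⟨fun i => Finset.univ.filter fun a => finProdFinEquiv (i, a) ∈ T, ?_⟩
  ext u
  simp only [bigCut, Finset.mem_filter, Finset.mem_univ, true_and, Prod.mk.eta,
    Equiv.apply_symm_apply]

lemma plcProj_charVec (f : Fin k → Finset (Fin L)) :
    plcProj k L (charVec (Iset f)) = cutVec (k * L) (bigCut f) := by
  classical
  funext e
  rw [plcProj_apply]
  have h1 : ∀ w, plcCoef e w * charVec (Iset f) w = if w ∈ Iset f then plcCoef e w else 0 := by
    intro w
    by_cases hw : w ∈ Iset f <;> simp [charVec, Set.indicator_apply, hw]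
  rw [Finset.sum_congr rfl fun w _ => h1 w, Finset.sum_ite_mem, Finset.univ_inter]
  rw [Iset, Finset.sum_union (iset_disj f), Finset.sum_image (fun a _ b _ h => inj1 f h),
    Finset.sum_image (fun a _ b _ h => inj2 f h)]
  have hu : e.1.1 ∈ bigCut f ↔ (finProdFinEquiv.symm e.1.1).2 ∈ f (finProdFinEquiv.symm e.1.1).1 := by
    simp [bigCut]
  have hv : e.1.2 ∈ bigCut f ↔ (finProdFinEquiv.symm e.1.2).2 ∈ f (finProdFinEquiv.symm e.1.2).1 := by
    simp [bigCut]
  rw [cutVec]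
  by_cases hpq : (finProdFinEquiv.symm e.1.1).1 = (finProdFinEquiv.symm e.1.2).1
  · have h2 : ∀ ij : {ij : Fin k × Fin k // ij.1 ≠ ij.2},
        plcCoef e (Sum.inr (ij, f ij.1.1, f ij.1.2)) = 0 := by
      intro ij
      simp only [plcCoef, Sum.elim_inl, Sum.elim_inr]
      rw [if_neg]
      rintro ⟨ha, hb⟩
      exact ij.2 (by rw [ha, hb, hpq])
    rw [Finset.sum_congr rfl fun ij _ => h2 ij, Finset.sum_const_zero, add_zero]
    rw [Finset.sum_eq_single (finProdFinEquiv.symm e.1.1).1]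
    · simp only [plcCoef, Sum.elim_inl, Sum.elim_inr]
      simp only [true_and]
      rw [if_pos hpq]
      by_cases hiff : ((finProdFinEquiv.symm e.1.1).2 ∈ f (finProdFinEquiv.symm e.1.1).1 ↔
          (finProdFinEquiv.symm e.1.2).2 ∈ f (finProdFinEquiv.symm e.1.1).1)
      · rw [if_pos hiff, if_pos]
        rw [hu, hv, ← hpq]
        exact hiff
      · rw [if_neg hiff, if_neg]
        rw [hu, hv, ← hpq]
        exact hiff
    · intro i _ hi
      simp only [plcCoef, Sum.elim_inl, Sum.elim_inr]
      rw [if_neg]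
      rintro ⟨ha, _⟩
      exact hi ha
    · intro h
      exact absurd (Finset.mem_univ _) h
  · have h2 : ∀ i : Fin k, plcCoef e (Sum.inl (i, f i)) = 0 := by
      intro i
      simp only [plcCoef, Sum.elim_inl, Sum.elim_inr]
      rw [if_neg]
      rintro ⟨ha, hb⟩
      exact hpq (ha ▸ hb)
    rw [Finset.sum_congr rfl fun i _ => h2 i, Finset.sum_const_zero, zero_add]
    rw [Finset.sum_eq_single
      (⟨((finProdFinEquiv.symm e.1.1).1, (finProdFinEquiv.symm e.1.2).1), hpq⟩ :
        {ij : Fin k × Fin k // ij.1 ≠ ij.2})]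
    · simp only [plcCoef, Sum.elim_inl, Sum.elim_inr]
      simp only [true_and, if_true]
      by_cases hiff : ((finProdFinEquiv.symm e.1.1).2 ∈ f (finProdFinEquiv.symm e.1.1).1 ↔
          (finProdFinEquiv.symm e.1.2).2 ∈ f (finProdFinEquiv.symm e.1.2).1)
      · rw [if_pos hiff, if_pos]
        rw [hu, hv]
        exact hiff
      · rw [if_neg hiff, if_neg]
        rw [hu, hv]
        exact hiff
    · intro ij _ hij
      simp only [plcCoef, Sum.elim_inl, Sum.elim_inr]
      rw [if_neg]
      rintro ⟨ha, hb⟩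
      exact hij (Subtype.ext (Prod.ext ha hb))
    · intro h
      exact absurd (Finset.mem_univ _) h

end Aux

/-- With `r = k·⌊log₂ n⌋`, the cut polytope `CUT(K_r)` is a projection of
`STAB_{k²}(PLC(k,n))` under a linear map. -/
theorem cut_is_projection_of_plc_stab (k n : ℕ) (hk : 1 ≤ k) (hn : 2 ≤ n) :
    ∃ π : (PLCVertex k (Nat.log 2 n) → ℝ) →ₗ[ℝ] (EdgeIdx (k * Nat.log 2 n) → ℝ),
      π '' STAB (PLC k n) (k ^ 2) = CUT (k * Nat.log 2 n) := by
  classical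
  refine ⟨plcProj k (Nat.log 2 n), ?_⟩
  rw [STAB, CUT, LinearMap.image_convexHull]
  congr 1
  ext x
  constructor
  · rintro ⟨y, ⟨S, hind, hcard, rfl⟩, rfl⟩
    obtain ⟨f, rfl⟩ := indep_structure hind hcard
    exact ⟨bigCut f, plcProj_charVec f⟩
  · rintro ⟨T, rfl⟩
    obtain ⟨f, rfl⟩ := bigCut_surj T
    exact ⟨charVec (Iset f), ⟨Iset f, iset_indep f, card_Iset f, rfl⟩, plcProj_charVec f⟩
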